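/- arXiv:2406.02007 — 4 statements merged into one kernel-verified Lean document; each statement's English description precedes it below -/
import Mathlib

section
/- Let C be a locally small category whose morphisms are mono, and for each object A let G_A ≤ Aut(A). If the small G-Ramsey degree t^G(A) equals some n ∈ ℕ and G_A is finite, then the small embedding Ramsey degree satisfies t(A) ≤ n·|G_A|. -/
open CategoryTheory

universe u v

variable {C : Type u} [Category.{v} C]

/-- `RamseyArrow G A B X k t` : for every `k`-coloring of the quotient
`hom(A,X)/∼_G` (encoded as a `G_A`-invariant coloring of `hom(A,X)`) there is
`w : B ⟶ X` such that at most `t` colors appear on `w · (hom(A,B)/∼_G)`. -/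
def RamseyArrow (G : ∀ A : C, Subgroup (Aut A)) (A B X : C) (k t : ℕ) : Prop :=
  ∀ χ : (A ⟶ X) → Fin k,
    (∀ (f : A ⟶ X) (α : Aut A), α ∈ G A → χ (α.hom ≫ f) = χ f) →
    ∃ w : B ⟶ X, (χ '' {h | ∃ f : A ⟶ B, h = f ≫ w}).ncard ≤ t

/-- The small `G`-Ramsey degree of `A` is at most `n`. -/
def HasRamseyDegLE (G : ∀ A : C, Subgroup (Aut A)) (A : C) (n : ℕ) : Prop :=
  ∀ (k : ℕ) (B : C), ∃ X : C, RamseyArrow G A B X k n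

/-- The trivial family of automorphism groups, giving the embedding Ramsey degree. -/
def trivG : ∀ A : C, Subgroup (Aut A) := fun _ => ⊥

/-- If all morphisms of `C` are mono, `G_A` is finite and the small `G`-Ramsey degree
`t^G(A)` equals `n ∈ ℕ` (i.e. `n` is the least integer with the `G`-Ramsey arrow
property), then the small embedding Ramsey degree satisfies `t(A) ≤ n·|G_A|`. -/
theorem smallDeg_le_mul (hmono : ∀ {X Y : C} (g : X ⟶ Y), Mono g)
    (G : ∀ A : C, Subgroup (Aut A)) (A : C) [Finite (G A)] (n : ℕ)
    (h : IsLeast {m : ℕ | 0 < m ∧ HasRamseyDegLE G A m} n) :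
    HasRamseyDegLE trivG A (n * Nat.card (G A)) := by
  classical
  intro k B
  obtain ⟨X, hX⟩ := h.1.2 (2 ^ k) B
  refine ⟨X, ?_⟩
  intro χ _
  have : Fintype (G A) := Fintype.ofFinite _
  -- the orbit coloring
  set S : (A ⟶ X) → Finset (Fin k) :=
    fun f => Finset.image (fun α : G A => χ ((α : Aut A).hom ≫ f)) Finset.univ with hS
  have e : Finset (Fin k) ≃ Fin (2 ^ k) :=
    Fintype.equivFinOfCardEq (by simp [Fintype.card_finset])
  set χ' : (A ⟶ X) → Fin (2 ^ k) := fun f => e (S f) with hχ'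
  have hSinv : ∀ (f : A ⟶ X) (α : Aut A), α ∈ G A → S (α.hom ≫ f) = S f := by
    intro f α hα
    ext c
    simp only [hS, Finset.mem_image, Finset.mem_univ, true_and]
    constructor
    · rintro ⟨β, hβ⟩
      refine ⟨(⟨α, hα⟩ : G A) * β, ?_⟩
      rw [← hβ]
      congr 1
      simp [Aut.Aut_mul_def, Iso.trans_hom]
      exact Category.assoc _ _ _
    · rintro ⟨γ, hγ⟩
      refine ⟨(⟨α, hα⟩ : G A)⁻¹ * γ, ?_⟩
      rw [← hγ]
      congr 1
      simp [Aut.Aut_mul_def, Aut.Aut_inv_def, Iso.trans_hom]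
      show ((γ : Aut A).hom ≫ α.inv) ≫ α.hom ≫ f = _
      simp only [Category.assoc]
      exact congrArg _ (Iso.inv_hom_id_assoc α f)
  have hinv : ∀ (f : A ⟶ X) (α : Aut A), α ∈ G A → χ' (α.hom ≫ f) = χ' f := by
    intro f α hα; simp [hχ', hSinv f α hα]
  obtain ⟨w, hw⟩ := hX χ' hinv
  refine ⟨w, ?_⟩
  set T : Set (A ⟶ X) := {h | ∃ f : A ⟶ B, h = f ≫ w} with hT
  -- choose representative in T for each χ'-color
  have hrep : ∀ v : ↥(χ' '' T), ∃ h, h ∈ T ∧ χ' h = (v : Fin (2 ^ k)) := by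
    rintro ⟨v, hv⟩; exact hv
  choose H hHT hHv using hrep
  -- key: every χ-color on T comes from the G-orbit of a representative
  have key : ∀ c : ↥(χ '' T), ∃ (v : ↥(χ' '' T)) (α : G A),
      (c : Fin k) = χ ((α : Aut A).hom ≫ H v) := by
    rintro ⟨c, hc⟩
    obtain ⟨f, hfT, hfc⟩ := hc
    have hv : χ' f ∈ χ' '' T := ⟨f, hfT, rfl⟩
    have hSeq : S (H ⟨χ' f, hv⟩) = S f := by
      have := hHv ⟨χ' f, hv⟩
      simpa [hχ'] using this
    have hcmem : c ∈ S f := by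
      simp only [hS, Finset.mem_image, Finset.mem_univ, true_and]
      refine ⟨1, ?_⟩
      show χ ((Iso.refl A).hom ≫ f) = c
      simpa using hfc
    rw [← hSeq] at hcmem
    simp only [hS, Finset.mem_image, Finset.mem_univ, true_and] at hcmem
    obtain ⟨α, hα⟩ := hcmem
    exact ⟨⟨χ' f, hv⟩, α, hα.symm⟩
  choose V Al hVA using key
  -- injection from χ '' T into (χ' '' T) × (G A)
  have hinj : Function.Injective (fun c : ↥(χ '' T) => (V c, Al c)) := by
    intro c c' hcc'
    have h1 : V c = V c' := congrArg Prod.fst hcc'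
    have h2 : Al c = Al c' := congrArg Prod.snd hcc'
    apply Subtype.ext
    rw [hVA c, hVA c', h1, h2]
  have hcard : Nat.card ↥(χ '' T) ≤ Nat.card (↥(χ' '' T) × ↥(G A)) :=
    Nat.card_le_card_of_injective _ hinj
  rw [Nat.card_prod] at hcard
  calc (χ '' T).ncard = Nat.card ↥(χ '' T) := (Nat.card_coe_set_eq _).symm
    _ ≤ Nat.card ↥(χ' '' T) * Nat.card ↥(G A) := hcard
    _ = (χ' '' T).ncard * Nat.card ↥(G A) := by rw [Nat.card_coe_set_eq]
    _ ≤ n * Nat.card ↥(G A) := Nat.mul_le_mul_right _ hw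
end

section
/- Let C be a locally small category whose morphisms are mono, and for each object A let G_A ≤ Aut(A). If G_A is finite and the small G-Ramsey degree satisfies t^G(A) ≥ n for some n ∈ ℕ, then the small embedding Ramsey degree satisfies t(A) ≥ n·|G_A|. -/
open CategoryTheory

universe u v

variable {C : Type u} [Category.{v} C]

/-- If all morphisms of `C` are mono, `G_A` is finite and the small `G`-Ramsey degree
satisfies `t^G(A) ≥ n` (no integer `m < n` has the `G`-Ramsey arrow property), then
the small embedding Ramsey degree satisfies `t(A) ≥ n·|G_A|`. -/
theorem smallDeg_ge_mul (hmono : ∀ {X Y : C} (g : X ⟶ Y), Mono g)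
    (G : ∀ A : C, Subgroup (Aut A)) (A : C) [Finite (G A)] (n : ℕ)
    (h : ∀ m < n, ¬ HasRamseyDegLE G A m) :
    ∀ m < n * Nat.card (G A), ¬ HasRamseyDegLE trivG A m := by
  intro m hm hyp
  have hGpos : 0 < Nat.card (G A) := Nat.card_pos
  set g := Nat.card (G A) with hg
  have hm' : m / g < n := (Nat.div_lt_iff_lt_mul hGpos).2 hm
  refine h (m / g) hm' ?_
  intro k B
  obtain ⟨X, hX⟩ := hyp (k * g) B
  refine ⟨X, ?_⟩
  intro χ hχ
  -- set up the orbit equivalence relation on hom(A, X)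
  classical
  let r : (A ⟶ X) → (A ⟶ X) → Prop := fun f f' => ∃ α : Aut A, α ∈ G A ∧ f' = α.hom ≫ f
  have hr_refl : ∀ f, r f f := fun f => ⟨1, one_mem _, (Category.id_comp f).symm⟩
  have hr_symm : ∀ {f f'}, r f f' → r f' f := by
    rintro f f' ⟨α, hα, rfl⟩
    exact ⟨α⁻¹, inv_mem hα, by simp [Aut.Aut_inv_def]; exact (Iso.inv_hom_id_assoc (X := A) (Y := A) α f).symm⟩
  have hr_trans : ∀ {f f' f''}, r f f' → r f' f'' → r f f'' := by
    rintro f f' f'' ⟨α, hα, rfl⟩ ⟨β, hβ, rfl⟩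
    exact ⟨α * β, mul_mem hα hβ, by rw [Aut.Aut_mul_def]; exact (Category.assoc _ _ _).symm⟩
  let s : Setoid (A ⟶ X) := ⟨r, hr_refl, hr_symm, hr_trans⟩
  let rep : (A ⟶ X) → (A ⟶ X) := fun f => Quotient.out (Quotient.mk s f)
  have hrep_rel : ∀ f, r (rep f) f := fun f => Quotient.mk_out (s := s) f
  have hrep_eq : ∀ {f f'}, r f f' → rep f = rep f' := by
    intro f f' hff'
    simp only [rep]
    congr 1
    exact Quotient.sound hff'
  -- the orbit-index function ι
  have hι_ex : ∀ f : A ⟶ X, ∃ α : G A, f = (α : Aut A).hom ≫ rep f := by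
    intro f
    obtain ⟨α, hα, hf⟩ := hrep_rel f
    exact ⟨⟨α, hα⟩, hf⟩
  let ι : (A ⟶ X) → G A := fun f => (hι_ex f).choose
  have hι_spec : ∀ f : A ⟶ X, f = ((ι f : G A) : Aut A).hom ≫ rep f := fun f => (hι_ex f).choose_spec
  have hι_inj : ∀ {f f'}, r f f' → ι f = ι f' → f = f' := by
    intro f f' hff' hii
    have hreq : rep f = rep f' := hrep_eq hff'
    rw [hι_spec f, hι_spec f', hii, hreq]
  -- the refined coloring
  obtain ⟨F⟩ := nonempty_fintype (↥(G A))
  have hcard : Nat.card (Fin k × G A) = k * g := by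
    simp [Nat.card_prod, hg]
  let e : Fin k × G A ≃ Fin (k * g) := Finite.equivFinOfCardEq hcard
  let χ₀ : (A ⟶ X) → Fin k × G A := fun f => (χ f, ι f)
  let χ' : (A ⟶ X) → Fin (k * g) := fun f => e (χ₀ f)
  have hχ'inv : ∀ (f : A ⟶ X) (α : Aut A), α ∈ trivG A → χ' (α.hom ≫ f) = χ' f := by
    intro f α hα
    simp only [trivG, Subgroup.mem_bot] at hα
    subst hα
    have h1 : (1 : Aut A).hom ≫ f = f := Category.id_comp f
    rw [h1]
  obtain ⟨w, hw⟩ := hX χ' hχ'inv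
  refine ⟨w, ?_⟩
  set S : Set (A ⟶ X) := {h | ∃ f : A ⟶ B, h = f ≫ w} with hS
  -- S is closed under the G-action
  have hSclosed : ∀ (f : A ⟶ X) (α : Aut A), f ∈ S → α.hom ≫ f ∈ S := by
    rintro f α ⟨f₀, rfl⟩
    exact ⟨α.hom ≫ f₀, by simp⟩
  -- finiteness
  have hfin : Finite (Fin k × G A) := by infer_instance
  have hTfin : (χ₀ '' S).Finite := Set.toFinite _
  have hT : (χ₀ '' S).ncard ≤ m := by
    have : χ' '' S = e '' (χ₀ '' S) := by
      simp only [χ', Set.image_image]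
    have h1 : (χ' '' S).ncard = (χ₀ '' S).ncard := by
      rw [this, Set.ncard_image_of_injective _ e.injective]
    rw [← h1]; exact hw
  -- build injection (χ '' S) × (G A) ↪ (χ₀ '' S)
  have hsel : ∀ c : (χ '' S), ∃ f ∈ S, χ f = c := by
    rintro ⟨c, f, hf, rfl⟩
    exact ⟨f, hf, rfl⟩
  choose sel hselS hselχ using hsel
  let Φ : (χ '' S) × (G A) → (χ₀ '' S) := fun p =>
    ⟨χ₀ ((p.2 : Aut A).hom ≫ sel p.1),
      Set.mem_image_of_mem _ (hSclosed _ _ (hselS p.1))⟩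
  have hΦfst : ∀ p : (χ '' S) × (G A), (Φ p : Fin k × G A).1 = p.1 := by
    intro p
    have := hχ (sel p.1) (p.2 : Aut A) p.2.2
    simpa [Φ, χ₀, this] using hselχ p.1
  have hΦinj : Function.Injective Φ := by
    intro p q hpq
    have hc : (p.1 : Fin k) = q.1 := by
      rw [← hΦfst p, ← hΦfst q, hpq]
    have hc' : p.1 = q.1 := Subtype.ext hc
    have hsnd : ι ((p.2 : Aut A).hom ≫ sel p.1) = ι ((q.2 : Aut A).hom ≫ sel q.1) := by
      have h2 := congrArg Prod.snd (Subtype.ext_iff.mp hpq)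
      simpa [Φ, χ₀] using h2
    rw [hc'] at hsnd
    -- both lie in the same orbit
    have horb : r ((p.2 : Aut A).hom ≫ sel q.1) ((q.2 : Aut A).hom ≫ sel q.1) := by
      refine hr_trans (f' := sel q.1) ?_ ?_
      · exact hr_symm ⟨(p.2 : Aut A), p.2.2, rfl⟩
      · exact ⟨(q.2 : Aut A), q.2.2, rfl⟩
    have heqf : (p.2 : Aut A).hom ≫ sel q.1 = (q.2 : Aut A).hom ≫ sel q.1 :=
      hι_inj horb hsnd
    have hmono' : Mono (sel q.1) := hmono _
    have : (p.2 : Aut A).hom = (q.2 : Aut A).hom := by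
      rwa [cancel_mono] at heqf
    have : (p.2 : Aut A) = (q.2 : Aut A) := Aut.ext this
    exact Prod.ext hc' (Subtype.ext this)
  have hcard_le : (χ '' S).ncard * g ≤ (χ₀ '' S).ncard := by
    have h1 : Nat.card ((χ '' S) × (G A)) ≤ Nat.card (χ₀ '' S) := by
      have : Finite (χ₀ '' S) := hTfin
      exact Nat.card_le_card_of_injective Φ hΦinj
    have h2 : Nat.card ((χ '' S) × (G A)) = (χ '' S).ncard * g := by
      rw [Nat.card_prod, Nat.card_coe_set_eq, hg]
    have h3 : Nat.card (χ₀ '' S) = (χ₀ '' S).ncard := Nat.card_coe_set_eq _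
    rw [h2, h3] at h1
    exact h1
  exact (Nat.le_div_iff_mul_le hGpos).2 (hcard_le.trans hT)
end

section
/- Let C be a locally small category whose morphisms are mono, with subgroups G_A ≤ Aut(A) for each object A. Then t(A) = |G_A| · t^G(A) for every object A, where the product is computed in ℕ ∪ {∞} with ∞·n = n·∞ = ∞·∞ = ∞. -/
open CategoryTheory

universe u v

variable {C : Type u} [Category.{v} C]

/-- The small `G`-Ramsey degree `t^G(A) ∈ ℕ ∪ {∞}`: the least positive integer `n`
with the `G`-Ramsey arrow property for all `k` and `B`, or `∞` if none exists. -/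
noncomputable def smallDeg (G : ∀ A : C, Subgroup (Aut A)) (A : C) : ℕ∞ :=
  sInf {n : ℕ∞ | ∃ m : ℕ, n = (m : ℕ∞) ∧ 0 < m ∧ HasRamseyDegLE G A m}

section OrbitIndex
variable (G : ∀ A : C, Subgroup (Aut A))

lemma aut_one_hom (A : C) : (1 : Aut A).hom = 𝟙 A := rfl

lemma aut_mul_hom_comp {A X : C} (α β : Aut A) (f : A ⟶ X) :
    (α * β).hom ≫ f = β.hom ≫ (α.hom ≫ f) := by
  simp [Aut.Aut_mul_def]
  exact Category.assoc _ _ _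

/-- Orbit equivalence on `hom(A,X)` under left action of `G A`. -/
def orbSetoid (A X : C) : Setoid (A ⟶ X) where
  r f h := ∃ α : Aut A, α ∈ G A ∧ f = α.hom ≫ h
  iseqv := by
    constructor
    · intro f; exact ⟨1, (G A).one_mem, by simp [aut_one_hom]⟩
    · rintro f h ⟨α, hα, rfl⟩
      refine ⟨α⁻¹, (G A).inv_mem hα, ?_⟩
      simp [Aut.Aut_inv_def]
      exact (Iso.inv_hom_id_assoc α h).symm
    · rintro f g h ⟨α, hα, rfl⟩ ⟨β, hβ, rfl⟩
      exact ⟨β * α, (G A).mul_mem hβ hα, by rw [aut_mul_hom_comp]⟩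

/-- A canonical representative in each orbit. -/
noncomputable def orbRep {A X : C} (f : A ⟶ X) : A ⟶ X :=
  (Quotient.mk (orbSetoid G A X) f).out

lemma orbRep_spec {A X : C} (f : A ⟶ X) :
    ∃ α : Aut A, α ∈ G A ∧ f = α.hom ≫ orbRep G f := by
  have h : Quotient.mk (orbSetoid G A X) (orbRep G f) = Quotient.mk _ f :=
    Quotient.out_eq _
  have := Quotient.exact h
  obtain ⟨α, hα, h2⟩ := this
  refine ⟨α⁻¹, (G A).inv_mem hα, ?_⟩
  rw [h2]
  simp [Aut.Aut_inv_def]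
  exact (Iso.inv_hom_id_assoc α f).symm

lemma orbRep_comp {A X : C} (f : A ⟶ X) (α : Aut A) (hα : α ∈ G A) :
    orbRep G (α.hom ≫ f) = orbRep G f := by
  unfold orbRep
  congr 1
  exact Quotient.sound ⟨α, hα, rfl⟩

/-- The index of `f` within its orbit: the unique `α ∈ G A` with `f = α ≫ rep f`. -/
noncomputable def orbIdx {A X : C} (f : A ⟶ X) : G A :=
  ⟨(orbRep_spec G f).choose, (orbRep_spec G f).choose_spec.1⟩

lemma orbIdx_spec {A X : C} (f : A ⟶ X) :
    f = ((orbIdx G f : Aut A)).hom ≫ orbRep G f :=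
  (orbRep_spec G f).choose_spec.2

lemma orbIdx_unique (hmono : ∀ {X Y : C} (g : X ⟶ Y), Mono g)
    {A X : C} (f : A ⟶ X) (α : Aut A) (hα : α ∈ G A)
    (h : f = α.hom ≫ orbRep G f) : orbIdx G f = ⟨α, hα⟩ := by
  haveI := hmono (orbRep G f)
  have h2 := orbIdx_spec G f
  have h3 : ((orbIdx G f : Aut A)).hom ≫ orbRep G f = α.hom ≫ orbRep G f :=
    h2.symm.trans h
  exact Subtype.ext (Aut.ext ((cancel_mono _).mp h3))

lemma orbIdx_comp (hmono : ∀ {X Y : C} (g : X ⟶ Y), Mono g)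
    {A X : C} (f : A ⟶ X) (α : Aut A) (hα : α ∈ G A) :
    orbIdx G (α.hom ≫ f) = orbIdx G f * ⟨α, hα⟩ := by
  apply orbIdx_unique G hmono
  rw [orbRep_comp G f α hα, aut_mul_hom_comp]
  exact congrArg (α.hom ≫ ·) (orbIdx_spec G f)

lemma orbIdx_surj (hmono : ∀ {X Y : C} (g : X ⟶ Y), Mono g)
    {A X : C} (f : A ⟶ X) (γ : G A) :
    orbIdx G ((((orbIdx G f)⁻¹ * γ : G A) : Aut A).hom ≫ f) = γ := by
  rw [orbIdx_comp G hmono f _ ((orbIdx G f)⁻¹ * γ : G A).2]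
  rw [Subtype.coe_eta, mul_inv_cancel_left]
end OrbitIndex

lemma triv_invariant {A X : C} {k : ℕ} (χ : (A ⟶ X) → Fin k) :
    ∀ (f : A ⟶ X) (α : Aut A), α ∈ trivG A → χ (α.hom ≫ f) = χ f := by
  intro f α hα
  have : α = 1 := Subgroup.mem_bot.mp hα
  subst this
  rw [aut_one_hom, Category.id_comp]

lemma dir1 (G : ∀ A : C, Subgroup (Aut A)) (A : C) [Fintype (G A)] {n : ℕ}
    (h : HasRamseyDegLE G A n) :
    HasRamseyDegLE (trivG (C := C)) A (Fintype.card (G A) * n) := by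
  classical
  intro k B
  obtain ⟨X, hX⟩ := h (Fintype.card (Finset (Fin k))) B
  refine ⟨X, fun χ _ => ?_⟩
  set e := Fintype.equivFin (Finset (Fin k)) with he
  set Φ : (A ⟶ X) → Finset (Fin k) :=
    fun f => Finset.image (fun β : G A => χ ((β : Aut A).hom ≫ f)) Finset.univ with hΦ
  have hinv : ∀ (f : A ⟶ X) (α : Aut A), α ∈ G A → Φ (α.hom ≫ f) = Φ f := by
    intro f α hα
    ext c
    simp only [hΦ, Finset.mem_image, Finset.mem_univ, true_and]
    constructor
    · rintro ⟨β, rfl⟩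
      exact ⟨(⟨α, hα⟩ : G A) * β, congrArg χ (aut_mul_hom_comp α (β : Aut A) f)⟩
    · rintro ⟨β, rfl⟩
      refine ⟨(⟨α, hα⟩ : G A)⁻¹ * β, congrArg χ ?_⟩
      show (α⁻¹ * (β : Aut A)).hom ≫ (α.hom ≫ f) = (β : Aut A).hom ≫ f
      rw [← aut_mul_hom_comp, mul_inv_cancel_left]
  obtain ⟨w, hw⟩ := hX (fun f => e (Φ f)) (fun f α hα => congrArg e (hinv f α hα))
  refine ⟨w, ?_⟩
  set S : Set (A ⟶ X) := {h | ∃ f : A ⟶ B, h = f ≫ w} with hS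
  have hfin : ((fun f => e (Φ f)) '' S).Finite := Set.toFinite _
  set V : Finset (Fin (Fintype.card (Finset (Fin k)))) := hfin.toFinset with hV
  have hsub : χ '' S ⊆ ↑(V.biUnion fun v => e.symm v) := by
    rintro c ⟨x, hx, rfl⟩
    simp only [Finset.coe_biUnion, Set.mem_iUnion, Finset.mem_coe]
    refine ⟨e (Φ x), ?_, ?_⟩
    · simp only [hV, Set.Finite.mem_toFinset]
      exact ⟨x, hx, rfl⟩
    · simp only [Equiv.symm_apply_apply]
      simp only [hΦ, Finset.mem_image, Finset.mem_univ, true_and]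
      exact ⟨1, by rw [OneMemClass.coe_one, aut_one_hom, Category.id_comp]⟩
  calc (χ '' S).ncard ≤ ((V.biUnion fun v => e.symm v : Finset (Fin k)) : Set (Fin k)).ncard :=
        Set.ncard_le_ncard hsub (Set.toFinite _)
    _ = (V.biUnion fun v => e.symm v).card := Set.ncard_coe_finset _
    _ ≤ V.card * Fintype.card (G A) := by
        refine Finset.card_biUnion_le_card_mul _ _ _ ?_
        intro v hv
        simp only [hV, Set.Finite.mem_toFinset] at hv
        obtain ⟨x, _, rfl⟩ := hv
        simp only [Equiv.symm_apply_apply, hΦ]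
        exact (Finset.card_image_le).trans (le_of_eq (Finset.card_univ))
    _ ≤ n * Fintype.card (G A) := by
        have : V.card ≤ n := by
          rw [hV, ← Set.ncard_eq_toFinset_card _ hfin]; exact hw
        exact Nat.mul_le_mul_right _ this
    _ = Fintype.card (G A) * n := Nat.mul_comm _ _

lemma dir2 (hmono : ∀ {X Y : C} (g : X ⟶ Y), Mono g)
    (G : ∀ A : C, Subgroup (Aut A)) (A : C) [Fintype (G A)] {m : ℕ}
    (h : HasRamseyDegLE (trivG (C := C)) A m) :
    HasRamseyDegLE G A (m / Fintype.card (G A)) := by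
  classical
  intro k B
  obtain ⟨X, hX⟩ := h (Fintype.card (Fin k × G A)) B
  refine ⟨X, fun χ hχ => ?_⟩
  set e := Fintype.equivFin (Fin k × G A) with he
  set χ' : (A ⟶ X) → Fin k × G A := fun f => (χ f, orbIdx G f) with hχ'
  obtain ⟨w, hw⟩ := hX (fun f => e (χ' f)) (triv_invariant (fun f => e (χ' f)))
  refine ⟨w, ?_⟩
  set S : Set (A ⟶ X) := {h | ∃ f : A ⟶ B, h = f ≫ w} with hS
  have hsub : (χ '' S) ×ˢ (Set.univ : Set (G A)) ⊆ χ' '' S := by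
    rintro ⟨c, γ⟩ hmem
    obtain ⟨⟨x, hx, rfl⟩, -⟩ := Set.mem_prod.mp hmem
    obtain ⟨f, rfl⟩ := hx
    set α : G A := (orbIdx G (f ≫ w))⁻¹ * γ with hα
    refine ⟨(α : Aut A).hom ≫ (f ≫ w), ⟨(α : Aut A).hom ≫ f, (Category.assoc _ _ _).symm⟩, ?_⟩
    have h1 : χ ((α : Aut A).hom ≫ (f ≫ w)) = χ (f ≫ w) := hχ _ _ α.2
    have h2 : orbIdx G ((α : Aut A).hom ≫ (f ≫ w)) = γ := orbIdx_surj G hmono (f ≫ w) γ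
    simp only [hχ', h1, h2]
  have hfin : (χ' '' S).Finite := Set.toFinite _
  have key : (χ '' S).ncard * Fintype.card (G A) ≤ m := by
    calc (χ '' S).ncard * Fintype.card (G A)
        = ((χ '' S) ×ˢ (Set.univ : Set (G A))).ncard := by
          rw [← Nat.card_coe_set_eq, ← Nat.card_coe_set_eq,
            Nat.card_congr (Equiv.Set.prod _ _), Nat.card_prod]
          congr 1
          rw [Nat.card_coe_set_eq, Set.ncard_univ, Nat.card_eq_fintype_card]
      _ ≤ (χ' '' S).ncard := Set.ncard_le_ncard hsub hfin
      _ = ((fun f => e (χ' f)) '' S).ncard := by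
          rw [show ((fun f => e (χ' f)) '' S) = e '' (χ' '' S) from (Set.image_comp e χ' S).symm ▸ rfl,
            Set.ncard_image_of_injective _ e.injective]
      _ ≤ m := hw
  have hpos : 0 < Fintype.card (G A) := Fintype.card_pos
  exact (Nat.le_div_iff_mul_le hpos).mpr key

lemma dir3 (hmono : ∀ {X Y : C} (g : X ⟶ Y), Mono g)
    (G : ∀ A : C, Subgroup (Aut A)) (A : C) {m : ℕ}
    (h : HasRamseyDegLE (trivG (C := C)) A m) :
    ENat.card (G A) ≤ (m : ℕ∞) := by
  classical
  by_contra hc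
  obtain ⟨j⟩ : Nonempty (Fin (m + 1) ↪ G A) := by
    rcases finite_or_infinite (G A) with hf | hi
    · haveI := Fintype.ofFinite (G A)
      rw [ENat.card_eq_coe_fintype_card, not_le, Nat.cast_lt] at hc
      exact Function.Embedding.nonempty_of_card_le (by simpa using hc)
    · exact ⟨(Fin.valEmbedding).trans (Infinite.natEmbedding _)⟩
  obtain ⟨X, hX⟩ := h (m + 1) A
  set e : G A → Fin (m + 1) :=
    fun x => if hx : ∃ i, j i = x then hx.choose else ⟨0, Nat.succ_pos m⟩ with he
  have hej : ∀ i, e (j i) = i := by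
    intro i
    have hx : ∃ i', j i' = j i := ⟨i, rfl⟩
    simp only [he, dif_pos hx]
    exact j.injective hx.choose_spec
  obtain ⟨w, hw⟩ := hX (fun f => e (orbIdx G f)) (triv_invariant (fun f => e (orbIdx G f)))
  set S : Set (A ⟶ X) := {h | ∃ f : A ⟶ A, h = f ≫ w} with hS
  have hsub : (Set.univ : Set (Fin (m + 1))) ⊆ (fun f => e (orbIdx G f)) '' S := by
    intro i _
    refine ⟨(((orbIdx G w)⁻¹ * j i : G A) : Aut A).hom ≫ w,
      ⟨(((orbIdx G w)⁻¹ * j i : G A) : Aut A).hom, rfl⟩, ?_⟩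
    show e (orbIdx G ((((orbIdx G w)⁻¹ * j i : G A) : Aut A).hom ≫ w)) = i
    rw [orbIdx_surj G hmono w (j i), hej]
  have : m + 1 ≤ m := by
    calc m + 1 = (Set.univ : Set (Fin (m + 1))).ncard := by
          rw [Set.ncard_univ, Nat.card_eq_fintype_card, Fintype.card_fin]
      _ ≤ ((fun f => e (orbIdx G f)) '' S).ncard :=
          Set.ncard_le_ncard hsub (Set.toFinite _)
      _ ≤ m := hw
  omega

lemma sInf_attained {Q : ℕ → Prop} (hne : ∃ m, Q m) :
    ∃ m : ℕ, Q m ∧ sInf {n : ℕ∞ | ∃ m' : ℕ, n = (m' : ℕ∞) ∧ Q m'} = (m : ℕ∞) ∧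
      ∀ m', Q m' → m ≤ m' := by
  refine ⟨sInf {m | Q m}, Nat.sInf_mem hne, ?_, fun m' hm' => Nat.sInf_le hm'⟩
  apply le_antisymm
  · exact sInf_le ⟨_, rfl, Nat.sInf_mem hne⟩
  · refine le_sInf ?_
    rintro n ⟨m', rfl, hm'⟩
    exact_mod_cast Nat.sInf_le hm'


/-- In a locally small category whose morphisms are mono, with subgroups
`G_A ≤ Aut(A)`, the embedding Ramsey degree satisfies `t(A) = |G_A| · t^G(A)` in
`ℕ ∪ {∞}` (where `∞·n = n·∞ = ∞·∞ = ∞`). -/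
theorem smallDeg_eq_card_mul (hmono : ∀ {X Y : C} (g : X ⟶ Y), Mono g)
    (G : ∀ A : C, Subgroup (Aut A)) (A : C) :
    smallDeg trivG A = ENat.card (G A) * smallDeg G A := by
  classical
  have hne0 : ENat.card (G A) ≠ 0 := fun h0 =>
    ((ENat.card_eq_zero_iff_empty _).mp h0).false (1 : G A)
  apply le_antisymm
  · by_cases hG : ∃ m : ℕ, 0 < m ∧ HasRamseyDegLE G A m
    · obtain ⟨m, ⟨hm0, hm⟩, hinf, -⟩ :=
        sInf_attained (Q := fun m => 0 < m ∧ HasRamseyDegLE G A m) hG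
      have hsd : smallDeg G A = (m : ℕ∞) := hinf
      rcases finite_or_infinite (G A) with hf | hi
      · haveI := Fintype.ofFinite (G A)
        have h1 := dir1 G A hm
        have hle : smallDeg trivG A ≤ ((Fintype.card (G A) * m : ℕ) : ℕ∞) :=
          sInf_le ⟨_, rfl, Nat.mul_pos Fintype.card_pos hm0, h1⟩
        rw [hsd, ENat.card_eq_coe_fintype_card]
        exact hle.trans (le_of_eq (by push_cast; ring))
      · rw [hsd, ENat.card_eq_top_of_infinite]
        have hm0' : ((m : ℕ∞)) ≠ 0 := by exact_mod_cast hm0.ne'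
        rw [ENat.top_mul hm0']
        exact le_top
    · have hsd : smallDeg G A = ⊤ := by
        unfold smallDeg
        convert sInf_empty
        · exact rfl
        rw [Set.eq_empty_iff_forall_notMem]
        rintro n ⟨m, rfl, hm0, hm⟩
        exact hG ⟨m, hm0, hm⟩
      rw [hsd, ENat.mul_top hne0]
      exact le_top
  · by_cases hT : ∃ m : ℕ, 0 < m ∧ HasRamseyDegLE (trivG (C := C)) A m
    · obtain ⟨m, ⟨hm0, hm⟩, hinf, -⟩ :=
        sInf_attained (Q := fun m => 0 < m ∧ HasRamseyDegLE (trivG (C := C)) A m) hT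
      have hsd : smallDeg trivG A = (m : ℕ∞) := hinf
      have hcard := dir3 hmono G A hm
      haveI hfin : Finite (G A) := by
        rcases finite_or_infinite (G A) with hf | hi
        · exact hf
        · rw [ENat.card_eq_top_of_infinite] at hcard
          exact absurd (top_le_iff.mp hcard) (ENat.coe_ne_top m)
      haveI := Fintype.ofFinite (G A)
      rw [ENat.card_eq_coe_fintype_card] at hcard ⊢
      have hgm : Fintype.card (G A) ≤ m := by exact_mod_cast hcard
      have hgpos : 0 < Fintype.card (G A) := Fintype.card_pos
      have h2 := dir2 hmono G A hm
      have hsG : smallDeg G A ≤ ((m / Fintype.card (G A) : ℕ) : ℕ∞) :=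
        sInf_le ⟨_, rfl, Nat.div_pos hgm hgpos, h2⟩
      rw [hsd]
      calc (Fintype.card (G A) : ℕ∞) * smallDeg G A
          ≤ (Fintype.card (G A) : ℕ∞) * ((m / Fintype.card (G A) : ℕ) : ℕ∞) :=
            mul_le_mul_right hsG _
        _ = ((Fintype.card (G A) * (m / Fintype.card (G A)) : ℕ) : ℕ∞) := by push_cast; ring
        _ ≤ (m : ℕ∞) := by
            have hd : Fintype.card (G A) * (m / Fintype.card (G A)) ≤ m := by
              rw [Nat.mul_comm]; exact Nat.div_mul_le_self m _
            exact_mod_cast hd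
    · have hsd : smallDeg trivG A = ⊤ := by
        unfold smallDeg
        convert sInf_empty
        · exact rfl
        rw [Set.eq_empty_iff_forall_notMem]
        rintro n ⟨m, rfl, hm0, hm⟩
        exact hT ⟨m, hm0, hm⟩
      rw [hsd]
      exact le_top
end

section
/- Let C be a locally small category whose morphisms are mono, with two families of subgroups G_A, H_A ≤ Aut(A) for each object A. Then |G_A| · t^G(A) = |H_A| · t^H(A) for all objects A (in ℕ ∪ {∞} arithmetic). -/
open CategoryTheory

universe u v

variable {C : Type u} [Category.{v} C]

namespace RamseyAux

variable (G : ∀ A : C, Subgroup (Aut A))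

/-- The orbit equivalence relation of `G A` on `hom(A,X)`. -/
def gSetoid (A X : C) : Setoid (A ⟶ X) where
  r h₁ h₂ := ∃ α : Aut A, α ∈ G A ∧ h₂ = α.hom ≫ h₁
  iseqv := by
    constructor
    · intro h
      refine ⟨1, one_mem _, ?_⟩
      show h = (Iso.refl A).hom ≫ h
      simp
    · rintro h₁ h₂ ⟨α, hα, rfl⟩
      exact ⟨α⁻¹, inv_mem hα, (Iso.inv_hom_id_assoc (X := A) (Y := A) α h₁).symm⟩
    · rintro h₁ h₂ h₃ ⟨α, hα, rfl⟩ ⟨β, hβ, rfl⟩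
      exact ⟨α * β, mul_mem hα hβ, by rw [Aut.Aut_mul_def]; exact (Category.assoc _ _ _).symm⟩

/-- A choice of representative of the `G`-orbit of `h`. -/
noncomputable def gRep {A X : C} (h : A ⟶ X) : A ⟶ X :=
  (Quotient.mk (gSetoid G A X) h).out

lemma gRep_spec {A X : C} (h : A ⟶ X) :
    ∃ α : Aut A, α ∈ G A ∧ h = α.hom ≫ gRep G h :=
  Quotient.mk_out (s := gSetoid G A X) h

lemma gRep_comp {A X : C} (h : A ⟶ X) {β : Aut A} (hβ : β ∈ G A) :
    gRep G (β.hom ≫ h) = gRep G h := by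
  unfold gRep
  congr 1
  exact (Quotient.sound (⟨β, hβ, rfl⟩ : (gSetoid G A X).r h (β.hom ≫ h))).symm

/-- The unique element of `G A` translating the representative to `h`. -/
noncomputable def gIdx {A X : C} (h : A ⟶ X) : Aut A :=
  (gRep_spec G h).choose

lemma gIdx_mem {A X : C} (h : A ⟶ X) : gIdx G h ∈ G A :=
  (gRep_spec G h).choose_spec.1

lemma gIdx_spec {A X : C} (h : A ⟶ X) : h = (gIdx G h).hom ≫ gRep G h :=
  (gRep_spec G h).choose_spec.2

variable (hmono : ∀ {X Y : C} (g : X ⟶ Y), Mono g)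
include hmono

lemma gIdx_unique {A X : C} (h : A ⟶ X) (α : Aut A)
    (hα : h = α.hom ≫ gRep G h) : α = gIdx G h := by
  have : Mono (gRep G h) := hmono _
  apply Aut.ext
  have h2 : (gIdx G h).hom ≫ gRep G h = α.hom ≫ gRep G h :=
    (gIdx_spec G h).symm.trans hα
  exact ((cancel_mono (gRep G h)).mp h2).symm

lemma gIdx_comp {A X : C} (h : A ⟶ X) {β : Aut A} (hβ : β ∈ G A) :
    gIdx G (β.hom ≫ h) = gIdx G h * β := by
  refine (gIdx_unique G hmono (β.hom ≫ h) (gIdx G h * β) ?_).symm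
  rw [gRep_comp G h hβ, Aut.Aut_mul_def]
  show β.hom ≫ h = (β.hom ≫ (gIdx G h).hom) ≫ gRep G h
  rw [Category.assoc, ← gIdx_spec G h]

end RamseyAux

lemma Set.ncard_prod' {α β : Type*} (s : Set α) (t : Set β) :
    (s ×ˢ t).ncard = s.ncard * t.ncard := by
  rw [← Nat.card_coe_set_eq, ← Nat.card_coe_set_eq, ← Nat.card_coe_set_eq, ← Nat.card_prod]
  exact Nat.card_congr (Equiv.Set.prod s t)

open RamseyAux in
lemma degLE_bot_of_degLE (hmono : ∀ {X Y : C} (g : X ⟶ Y), Mono g)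
    (G : ∀ A : C, Subgroup (Aut A)) (A : C) [Finite (G A)] {n : ℕ}
    (hG : HasRamseyDegLE G A n) :
    HasRamseyDegLE (fun B => (⊥ : Subgroup (Aut B))) A (Nat.card (G A) * n) := by
  classical
  intro k B
  haveI : Fintype (G A) := Fintype.ofFinite _
  set k' := Fintype.card ((G A) → Fin k) with hk'
  let e : ((G A) → Fin k) ≃ Fin k' := Fintype.equivFin _
  obtain ⟨X, hX⟩ := hG k' B
  refine ⟨X, ?_⟩
  intro χ _
  let χ' : (A ⟶ X) → Fin k' := fun h => e fun α => χ (α.1.hom ≫ gRep G h)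
  have hinv : ∀ (f : A ⟶ X) (α : Aut A), α ∈ G A → χ' (α.hom ≫ f) = χ' f := by
    intro f α hα
    simp only [χ']
    rw [gRep_comp G f hα]
  obtain ⟨w, hw⟩ := hX χ' hinv
  refine ⟨w, ?_⟩
  set S := {h : A ⟶ X | ∃ f : A ⟶ B, h = f ≫ w} with hS
  rcases S.eq_empty_or_nonempty with hSe | ⟨h₀, hh₀⟩
  · simp [hSe]
  · let pick : Fin k → (A ⟶ X) := fun c => if hc : ∃ h ∈ S, χ h = c then hc.choose else h₀
    have hpickS : ∀ c ∈ χ '' S, pick c ∈ S := by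
      rintro c ⟨h, hh, rfl⟩
      have hc : ∃ h' ∈ S, χ h' = χ h := ⟨h, hh, rfl⟩
      simp only [pick, dif_pos hc]
      exact hc.choose_spec.1
    have hpickχ : ∀ c ∈ χ '' S, χ (pick c) = c := by
      rintro c ⟨h, hh, rfl⟩
      have hc : ∃ h' ∈ S, χ h' = χ h := ⟨h, hh, rfl⟩
      simp only [pick, dif_pos hc]
      exact hc.choose_spec.2
    have hval : ∀ h : A ⟶ X, χ h = (e.symm (χ' h)) ⟨gIdx G h, gIdx_mem G h⟩ := by
      intro h
      simp only [χ', Equiv.symm_apply_apply]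
      exact congrArg χ (gIdx_spec G h)
    have hle : (χ '' S).ncard ≤ ((χ' '' S) ×ˢ (Set.univ : Set (G A))).ncard := by
      apply Set.ncard_le_ncard_of_injOn
        (fun c => (χ' (pick c), (⟨gIdx G (pick c), gIdx_mem G (pick c)⟩ : (G A))))
      · intro c hc
        exact ⟨⟨pick c, hpickS c hc, rfl⟩, Set.mem_univ _⟩
      · intro c hc d hd hcd
        rw [Prod.ext_iff] at hcd
        obtain ⟨h1, h2⟩ := hcd
        dsimp only at h1 h2
        rw [← hpickχ c hc, ← hpickχ d hd, hval, hval, h1]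
        exact congrArg _ h2
    rw [Set.ncard_prod', Set.ncard_univ] at hle
    calc (χ '' S).ncard ≤ (χ' '' S).ncard * Nat.card (G A) := hle
      _ ≤ n * Nat.card (G A) := Nat.mul_le_mul_right _ hw
      _ = Nat.card (G A) * n := Nat.mul_comm _ _

open RamseyAux in
lemma degLE_of_degLE_bot (hmono : ∀ {X Y : C} (g : X ⟶ Y), Mono g)
    (G : ∀ A : C, Subgroup (Aut A)) (A : C) [Finite (G A)] {m : ℕ}
    (hb : HasRamseyDegLE (fun B => (⊥ : Subgroup (Aut B))) A m) :
    HasRamseyDegLE G A (m / Nat.card (G A)) := by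
  classical
  intro k B
  haveI : Fintype (G A) := Fintype.ofFinite _
  haveI : Nonempty (G A) := ⟨1⟩
  set k' := Fintype.card (Fin k × (G A)) with hk'
  let e : (Fin k × (G A)) ≃ Fin k' := Fintype.equivFin _
  obtain ⟨X, hX⟩ := hb k' B
  refine ⟨X, ?_⟩
  intro χ hχ
  let χ' : (A ⟶ X) → Fin k' := fun h => e (χ h, ⟨gIdx G h, gIdx_mem G h⟩)
  have hinv' : ∀ (f : A ⟶ X) (α : Aut A), α ∈ (⊥ : Subgroup (Aut A)) → χ' (α.hom ≫ f) = χ' f := by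
    intro f α hα
    obtain rfl : α = 1 := Subgroup.mem_bot.mp hα
    show χ' ((Iso.refl A).hom ≫ f) = χ' f
    simp
  obtain ⟨w, hw⟩ := hX χ' hinv'
  refine ⟨w, ?_⟩
  set S := {h : A ⟶ X | ∃ f : A ⟶ B, h = f ≫ w} with hS
  have hmem : ∀ p ∈ (χ '' S) ×ˢ (Set.univ : Set (G A)), e p ∈ χ' '' S := by
    rintro ⟨c, α⟩ ⟨⟨h, hhS, rfl⟩, -⟩
    obtain ⟨f, hf⟩ := hhS
    set β : Aut A := (gIdx G h)⁻¹ * α.1 with hβ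
    have hβmem : β ∈ G A := mul_mem (inv_mem (gIdx_mem G h)) α.2
    refine ⟨β.hom ≫ h, ⟨β.hom ≫ f, by rw [hf, Category.assoc]⟩, ?_⟩
    have h1 : χ (β.hom ≫ h) = χ h := hχ h β hβmem
    have h2 : gIdx G (β.hom ≫ h) = α.1 := by
      rw [gIdx_comp G hmono h hβmem, hβ]
      group
    show e (χ (β.hom ≫ h), ⟨gIdx G (β.hom ≫ h), gIdx_mem G (β.hom ≫ h)⟩) = e (χ h, α)
    congr 1
    exact Prod.ext h1 (Subtype.ext h2)
  have hle : ((χ '' S) ×ˢ (Set.univ : Set (G A))).ncard ≤ (χ' '' S).ncard :=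
    Set.ncard_le_ncard_of_injOn e hmem (e.injective.injOn) (Set.toFinite _)
  rw [Set.ncard_prod', Set.ncard_univ] at hle
  exact (Nat.le_div_iff_mul_le Nat.card_pos).mpr (hle.trans hw)

open RamseyAux in
lemma card_le_of_degLE_bot (hmono : ∀ {X Y : C} (g : X ⟶ Y), Mono g)
    (G : ∀ A : C, Subgroup (Aut A)) (A : C) [Finite (G A)] {m : ℕ}
    (hb : HasRamseyDegLE (fun B => (⊥ : Subgroup (Aut B))) A m) :
    Nat.card (G A) ≤ m := by
  classical
  haveI : Fintype (G A) := Fintype.ofFinite _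
  let e : (G A) ≃ Fin (Fintype.card (G A)) := Fintype.equivFin _
  obtain ⟨X, hX⟩ := hb (Fintype.card (G A)) A
  let χ : (A ⟶ X) → Fin (Fintype.card (G A)) := fun h => e ⟨gIdx G h, gIdx_mem G h⟩
  have hinv' : ∀ (f : A ⟶ X) (α : Aut A), α ∈ (⊥ : Subgroup (Aut A)) → χ (α.hom ≫ f) = χ f := by
    intro f α hα
    obtain rfl : α = 1 := Subgroup.mem_bot.mp hα
    show χ ((Iso.refl A).hom ≫ f) = χ f
    simp
  obtain ⟨w, hw⟩ := hX χ hinv'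
  have hall : ∀ j : Fin (Fintype.card (G A)),
      j ∈ χ '' {h | ∃ f : A ⟶ A, h = f ≫ w} := by
    intro j
    set α := e.symm j with hα
    set β : Aut A := (gIdx G w)⁻¹ * α.1 with hβ
    have hβmem : β ∈ G A := mul_mem (inv_mem (gIdx_mem G w)) α.2
    refine ⟨β.hom ≫ w, ⟨β.hom, rfl⟩, ?_⟩
    have h2 : gIdx G (β.hom ≫ w) = α.1 := by
      rw [gIdx_comp G hmono w hβmem, hβ]
      group
    show e ⟨gIdx G (β.hom ≫ w), gIdx_mem G (β.hom ≫ w)⟩ = j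
    rw [show (⟨gIdx G (β.hom ≫ w), gIdx_mem G (β.hom ≫ w)⟩ : (G A)) = α from Subtype.ext h2,
      hα, Equiv.apply_symm_apply]
  have huniv : (Set.univ : Set (Fin (Fintype.card (G A)))) ⊆
      χ '' {h | ∃ f : A ⟶ A, h = f ≫ w} := fun j _ => hall j
  have hcard := Set.ncard_le_ncard huniv (Set.toFinite _)
  rw [Set.ncard_univ, Nat.card_eq_fintype_card, Fintype.card_fin] at hcard
  rw [Nat.card_eq_fintype_card]
  exact hcard.trans hw

open RamseyAux in
lemma not_degLE_bot_of_infinite (hmono : ∀ {X Y : C} (g : X ⟶ Y), Mono g)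
    (G : ∀ A : C, Subgroup (Aut A)) (A : C) (hinf : Infinite (G A)) {m : ℕ}
    (hb : HasRamseyDegLE (fun B => (⊥ : Subgroup (Aut B))) A m) : False := by
  classical
  let ι : ℕ ↪ (G A) := Infinite.natEmbedding _
  obtain ⟨X, hX⟩ := hb (m + 1) A
  let χ : (A ⟶ X) → Fin (m + 1) := fun h =>
    if hx : ∃ i : Fin (m + 1), ι i.1 = (⟨gIdx G h, gIdx_mem G h⟩ : (G A)) then hx.choose else 0
  have hinv' : ∀ (f : A ⟶ X) (α : Aut A), α ∈ (⊥ : Subgroup (Aut A)) → χ (α.hom ≫ f) = χ f := by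
    intro f α hα
    obtain rfl : α = 1 := Subgroup.mem_bot.mp hα
    show χ ((Iso.refl A).hom ≫ f) = χ f
    simp
  obtain ⟨w, hw⟩ := hX χ hinv'
  have hall : ∀ j : Fin (m + 1), j ∈ χ '' {h | ∃ f : A ⟶ A, h = f ≫ w} := by
    intro j
    set α := ι j.1 with hα
    set β : Aut A := (gIdx G w)⁻¹ * α.1 with hβ
    have hβmem : β ∈ G A := mul_mem (inv_mem (gIdx_mem G w)) α.2
    refine ⟨β.hom ≫ w, ⟨β.hom, rfl⟩, ?_⟩
    have h2v : gIdx G (β.hom ≫ w) = α.1 := by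
      rw [gIdx_comp G hmono w hβmem, hβ]
      group
    have h2 : (⟨gIdx G (β.hom ≫ w), gIdx_mem G (β.hom ≫ w)⟩ : (G A)) = α := Subtype.ext h2v
    have hx : ∃ i : Fin (m + 1),
        ι i.1 = (⟨gIdx G (β.hom ≫ w), gIdx_mem G (β.hom ≫ w)⟩ : (G A)) :=
      ⟨j, (h2.trans hα).symm⟩
    show (if hx' : ∃ i : Fin (m + 1),
        ι i.1 = (⟨gIdx G (β.hom ≫ w), gIdx_mem G (β.hom ≫ w)⟩ : (G A)) then hx'.choose else 0) = j
    rw [dif_pos hx]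
    exact Fin.ext (ι.injective (hx.choose_spec.trans (h2.trans hα)))
  have huniv : (Set.univ : Set (Fin (m + 1))) ⊆
      χ '' {h | ∃ f : A ⟶ A, h = f ≫ w} := fun j _ => hall j
  have hcard := Set.ncard_le_ncard huniv (Set.toFinite _)
  rw [Set.ncard_univ, Nat.card_eq_fintype_card, Fintype.card_fin] at hcard
  omega

lemma card_mul_smallDeg_eq_bot (hmono : ∀ {X Y : C} (g : X ⟶ Y), Mono g)
    (G : ∀ A : C, Subgroup (Aut A)) (A : C) :
    ENat.card (G A) * smallDeg G A = smallDeg (fun B => (⊥ : Subgroup (Aut B))) A := by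
  rcases finite_or_infinite (G A) with hfin | hinf
  · haveI := hfin
    haveI : Nonempty (G A) := ⟨1⟩
    set g := Nat.card (G A) with hg
    have hg0 : 0 < g := Nat.card_pos
    have hcard : ENat.card (G A) = (g : ℕ∞) := by
      haveI : Fintype (G A) := Fintype.ofFinite _
      rw [ENat.card_eq_coe_fintype_card, hg, Nat.card_eq_fintype_card]
    rw [hcard]
    unfold smallDeg
    apply le_antisymm
    · apply le_sInf
      rintro b ⟨m, rfl, hm, hbm⟩
      have h1 := degLE_of_degLE_bot hmono G A hbm
      have h2 := card_le_of_degLE_bot hmono G A hbm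
      have hmem : ((m / g : ℕ) : ℕ∞) ∈
          {n : ℕ∞ | ∃ m' : ℕ, n = (m' : ℕ∞) ∧ 0 < m' ∧ HasRamseyDegLE G A m'} :=
        ⟨m / g, rfl, Nat.div_pos h2 hg0, h1⟩
      calc (g : ℕ∞) * sInf {n : ℕ∞ | ∃ m' : ℕ, n = (m' : ℕ∞) ∧ 0 < m' ∧ HasRamseyDegLE G A m'}
          ≤ (g : ℕ∞) * ((m / g : ℕ) : ℕ∞) := mul_le_mul_right (sInf_le hmem) _
        _ = ((g * (m / g) : ℕ) : ℕ∞) := by rw [Nat.cast_mul]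
        _ ≤ (m : ℕ∞) := by
            apply Nat.cast_le.mpr
            calc g * (m / g) = m / g * g := Nat.mul_comm _ _
              _ ≤ m := Nat.div_mul_le_self m g
    · by_cases hne : {n : ℕ | 0 < n ∧ HasRamseyDegLE G A n}.Nonempty
      · have hT := Nat.sInf_mem hne
        set n₀ := sInf {n : ℕ | 0 < n ∧ HasRamseyDegLE G A n} with hn₀
        have hEq : sInf {n : ℕ∞ | ∃ m' : ℕ, n = (m' : ℕ∞) ∧ 0 < m' ∧ HasRamseyDegLE G A m'}
            = (n₀ : ℕ∞) := by
          apply le_antisymm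
          · exact sInf_le ⟨n₀, rfl, hT.1, hT.2⟩
          · apply le_sInf
            rintro b ⟨m', rfl, hm', h'⟩
            have hm'' : m' ∈ {n : ℕ | 0 < n ∧ HasRamseyDegLE G A n} := ⟨hm', h'⟩
            exact_mod_cast Nat.sInf_le hm''
        rw [hEq]
        have hb := degLE_bot_of_degLE hmono G A hT.2
        have hmem2 : (((g * n₀ : ℕ)) : ℕ∞) ∈ {n : ℕ∞ | ∃ m' : ℕ, n = (m' : ℕ∞) ∧ 0 < m' ∧
            HasRamseyDegLE (fun B => (⊥ : Subgroup (Aut B))) A m'} :=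
          ⟨g * n₀, rfl, Nat.mul_pos hg0 hT.1, hb⟩
        exact (sInf_le hmem2).trans_eq (by rw [Nat.cast_mul])
      · have hempty : {n : ℕ∞ | ∃ m' : ℕ, n = (m' : ℕ∞) ∧ 0 < m' ∧ HasRamseyDegLE G A m'}
            = ∅ := by
          ext b
          simp only [Set.mem_setOf_eq, Set.mem_empty_iff_false, iff_false]
          rintro ⟨m', rfl, hm', h'⟩
          exact hne ⟨m', hm', h'⟩
        rw [hempty, sInf_empty]
        have hgt : (g : ℕ∞) * ⊤ = ⊤ := ENat.mul_top (by exact_mod_cast hg0.ne')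
        rw [hgt]
        exact le_top
  · haveI := hinf
    have h1 : (1 : ℕ∞) ≤ smallDeg G A := by
      apply le_sInf
      rintro b ⟨m', rfl, hm', -⟩
      exact_mod_cast hm'
    have hne0 : smallDeg G A ≠ 0 := by
      intro h0
      rw [h0] at h1
      simp at h1
    rw [ENat.card_eq_top_of_infinite, ENat.top_mul hne0]
    have hempty : {n : ℕ∞ | ∃ m' : ℕ, n = (m' : ℕ∞) ∧ 0 < m' ∧
        HasRamseyDegLE (fun B => (⊥ : Subgroup (Aut B))) A m'} = ∅ := by
      ext b
      simp only [Set.mem_setOf_eq, Set.mem_empty_iff_false, iff_false]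
      rintro ⟨m', rfl, hm', h'⟩
      exact not_degLE_bot_of_infinite hmono G A hinf h'
    unfold smallDeg
    rw [hempty, sInf_empty]

/-- In a locally small category whose morphisms are mono, for two families of
subgroups `G_A, H_A ≤ Aut(A)` one has `|G_A| · t^G(A) = |H_A| · t^H(A)` for every
object `A` (in `ℕ ∪ {∞}` arithmetic). -/
theorem card_mul_smallDeg_eq (hmono : ∀ {X Y : C} (g : X ⟶ Y), Mono g)
    (G H : ∀ A : C, Subgroup (Aut A)) (A : C) :
    ENat.card (G A) * smallDeg G A = ENat.card (H A) * smallDeg H A := by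
  rw [card_mul_smallDeg_eq_bot hmono G A, card_mul_smallDeg_eq_bot hmono H A]
end
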